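/- Let n > m be positive integers and q a prime power. If C ⊆ F_{q^m}^n is an F_{q^m}-linear vector rank-metric code that is MRD, i.e. dim_{F_{q^m}}(C) = n − d_min(C) + 1, then C = 0 or C = F_{q^m}^n. -/
import Mathlib


open Matrix

/-- The rank weight of `v : Fqm^n`: the dimension over `Fq` of the `Fq`-span of its entries. -/
noncomputable def rkw (Fq : Type*) [Field Fq] {Fqm : Type*} [Field Fqm] [Algebra Fq Fqm]
    {n : ℕ} (v : Fin n → Fqm) : ℕ :=
  Module.finrank Fq (Submodule.span Fq (Set.range v))

open scoped Classical in
/-- Minimum distance of a vector rank-metric code. -/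
noncomputable def dminVec (Fq : Type*) [Field Fq] {Fqm : Type*} [Field Fqm] [Algebra Fq Fqm]
    {n : ℕ} (C : Submodule Fqm (Fin n → Fqm)) : ℕ :=
  if C = ⊥ then n + 1 else sInf {r : ℕ | ∃ v ∈ C, v ≠ 0 ∧ rkw Fq v = r}

/-- For `n > m`, the only MRD vector rank-metric codes in `Fqm^n` are `0` and `Fqm^n`. -/
theorem stmt7 {Fq Fqm : Type*} [Field Fq] [Fintype Fq] [Field Fqm] [Algebra Fq Fqm]
    [FiniteDimensional Fq Fqm] {n : ℕ} (hn : Module.finrank Fq Fqm < n)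
    (C : Submodule Fqm (Fin n → Fqm))
    (hMRD : (Module.finrank Fqm C : ℤ) = (n : ℤ) - (dminVec Fq C : ℤ) + 1) :
    C = ⊥ ∨ C = ⊤ := by
  classical
  by_cases hbot : C = ⊥
  · exact Or.inl hbot
  right
  set m := Module.finrank Fq Fqm with hm
  set d := dminVec Fq C with hd
  set k := Module.finrank Fqm C with hk
  set S : Set ℕ := {r : ℕ | ∃ v ∈ C, v ≠ 0 ∧ rkw Fq v = r} with hS
  have hdS : d = sInf S := by simp [hd, dminVec, hbot, hS]
  obtain ⟨v0, hv0C, hv0ne⟩ := (Submodule.ne_bot_iff C).mp hbot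
  have hne : S.Nonempty := ⟨rkw Fq v0, v0, hv0C, hv0ne, rfl⟩
  have hdmem : d ∈ S := hdS ▸ Nat.sInf_mem hne
  obtain ⟨w, hwC, hwne, hwr⟩ := hdmem
  have hdle : ∀ v ∈ C, v ≠ 0 → d ≤ rkw Fq v := by
    intro v hv hvne
    rw [hdS]
    exact Nat.sInf_le ⟨v, hv, hvne, rfl⟩
  -- 1 ≤ d
  have hd1 : 1 ≤ d := by
    rw [← hwr]
    obtain ⟨i, hi⟩ : ∃ i, w i ≠ 0 := by
      by_contra h
      push_neg at h
      exact hwne (funext h)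
    have hmem : w i ∈ Submodule.span Fq (Set.range w) :=
      Submodule.subset_span ⟨i, rfl⟩
    have : Submodule.span Fq (Set.range w) ≠ ⊥ := by
      intro h
      rw [h, Submodule.mem_bot] at hmem
      exact hi hmem
    have := Submodule.one_le_finrank_iff.mpr this
    exact this
  -- d ≤ m
  have hdm : d ≤ m := by
    rw [← hwr]
    exact Submodule.finrank_le _
  -- choose W of finrank d - 1
  obtain ⟨b, hb⟩ := exists_linearIndependent_of_le_finrank
    (R := Fq) (M := Fqm) (n := d - 1) (le_trans (Nat.sub_le _ _) hdm)
  set W : Submodule Fq Fqm := Submodule.span Fq (Set.range b) with hW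
  have hWrank : Module.finrank Fq W = d - 1 := by
    rw [hW, finrank_span_eq_card hb, Fintype.card_fin]
  -- the projection map
  let f : (Fin n → Fqm) →ₗ[Fq] (Fin n → Fqm ⧸ W) :=
    LinearMap.pi fun i => W.mkQ.comp (LinearMap.proj i)
  let g := f.comp (C.restrictScalars Fq).subtype
  have hginj : Function.Injective g := by
    rw [← LinearMap.ker_eq_bot]
    rw [Submodule.eq_bot_iff]
    rintro ⟨v, hvC⟩ hv
    have hv' : g ⟨v, hvC⟩ = 0 := hv
    have hvW : ∀ i, v i ∈ W := by
      intro i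
      have h2 := congrFun hv' i
      rw [show g ⟨v, hvC⟩ i = W.mkQ (v i) from rfl] at h2
      simpa [Submodule.Quotient.mk_eq_zero] using h2
    by_contra hv0
    have hvne : v ≠ 0 := by
      intro h
      exact hv0 (by simp [h])
    have hle : rkw Fq v ≤ d - 1 := by
      have hsub : Submodule.span Fq (Set.range v) ≤ W := by
        rw [Submodule.span_le]
        rintro x ⟨i, rfl⟩
        exact hvW i
      calc rkw Fq v ≤ Module.finrank Fq W := Submodule.finrank_mono hsub
        _ = d - 1 := hWrank
    have := hdle v hvC hvne
    omega
  -- dimension bound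
  have hdim1 : Module.finrank Fq (C.restrictScalars Fq) ≤
      Module.finrank Fq (Fin n → Fqm ⧸ W) :=
    LinearMap.finrank_le_finrank_of_injective hginj
  have hquot : Module.finrank Fq (Fqm ⧸ W) = m - (d - 1) := by
    have := Submodule.finrank_quotient_add_finrank W
    omega
  have hpi : Module.finrank Fq (Fin n → Fqm ⧸ W) = n * (m - (d - 1)) := by
    rw [Module.finrank_pi_fintype, hquot]
    simp [Finset.sum_const, mul_comm]
  have htower : Module.finrank Fq (C.restrictScalars Fq) = m * k := by
    exact (Module.finrank_mul_finrank Fq Fqm C).symm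
  have hbound : m * k ≤ n * (m - (d - 1)) := by
    rw [← htower, ← hpi]
    exact hdim1
  -- conclude d = 1, k = n
  have hkn : k = n := by
    have hcast : (m : ℤ) * k ≤ (n : ℤ) * ((m : ℤ) - ((d : ℤ) - 1)) := by
      zify [show d - 1 ≤ m by omega, show 1 ≤ d from hd1] at hbound
      linarith [hbound]
    have hk' : (k : ℤ) = (n : ℤ) - d + 1 := hMRD
    have hd1' : (1 : ℤ) ≤ d := by exact_mod_cast hd1
    have hdm' : (d : ℤ) ≤ m := by exact_mod_cast hdm
    have hmn : (m : ℤ) < n := by exact_mod_cast hn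
    have hd_eq : (d : ℤ) = 1 := by nlinarith
    have : (k : ℤ) = n := by omega
    exact_mod_cast this
  apply Submodule.eq_top_of_finrank_eq
  rw [← hk, hkn, Module.finrank_pi]
  simp
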